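/- For the Walsh-Paley system, ‖D_{2^{2n+1}} − D_{2^{2n}}‖_{H_p} ≤ c_p · 2^{2n(1−1/p)} for 0 < p ≤ 1, where the H_p quasi-norm is taken with respect to the dyadic martingale filtration on G. -/

import Mathlib

open MeasureTheory ENNReal Filter
open scoped Classical

noncomputable section

instance : TopologicalSpace (ZMod 2) := ⊥
instance : DiscreteTopology (ZMod 2) := ⟨rfl⟩
instance : MeasurableSpace (ZMod 2) := ⊤
instance : BorelSpace (ZMod 2) := ⟨borel_eq_top_of_discrete.symm⟩
instance : IsTopologicalAddGroup (ZMod 2) where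
  continuous_add := continuous_of_discreteTopology
  continuous_neg := continuous_of_discreteTopology

/-- The dyadic group `G = (ℤ/2)^ℕ`. -/
abbrev G2 : Type := ℕ → ZMod 2

/-- Normalized Haar (probability) measure on `G2`. -/
def muG : Measure G2 :=
  Measure.addHaarMeasure ⟨⟨Set.univ, isCompact_univ⟩, by
    rw [interior_univ]; exact Set.univ_nonempty⟩

/-- Rademacher functions. -/
def rad (k : ℕ) (x : G2) : ℝ := (-1 : ℝ) ^ ((x k).val)

/-- Walsh–Paley functions. -/
def walsh (n : ℕ) (x : G2) : ℝ :=
  ∏ k ∈ Finset.range n, if n.testBit k then rad k x else 1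

/-- Walsh–Dirichlet kernels. -/
def dirichlet (n : ℕ) (x : G2) : ℝ := ∑ k ∈ Finset.range n, walsh k x

/-- The cylinder sets `I_n`. -/
def cyl (n : ℕ) : Set G2 := {x | ∀ i < n, x i = 0}

/-- Walsh–Fourier coefficients. -/
def fhat (f : G2 → ℝ) (k : ℕ) : ℝ := ∫ x, f x * walsh k x ∂muG

/-- Walsh–Fourier partial sums of a function. -/
def funS (f : G2 → ℝ) (n : ℕ) (x : G2) : ℝ :=
  ∑ k ∈ Finset.range n, fhat f k * walsh k x

/-- Partial sums of the Walsh series of a dyadic martingale given by coefficients `c`. -/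
def mS (c : ℕ → ℝ) (n : ℕ) (x : G2) : ℝ := ∑ k ∈ Finset.range n, c k * walsh k x

/-- The martingale maximal function. -/
def mMax (c : ℕ → ℝ) (x : G2) : ℝ≥0∞ := ⨆ n : ℕ, (‖mS c (2 ^ n) x‖₊ : ℝ≥0∞)

/-- The martingale Hardy space quasi-norm `H_p`. -/
def mHp (p : ℝ) (c : ℕ → ℝ) : ℝ≥0∞ := (∫⁻ x, (mMax c x) ^ p ∂muG) ^ (1 / p)

/-- The maximal function of an integrable function. -/
def funMax (f : G2 → ℝ) (x : G2) : ℝ≥0∞ := ⨆ n : ℕ, (‖funS f (2 ^ n) x‖₊ : ℝ≥0∞)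

/-- The Hardy space quasi-norm of an integrable function. -/
def funHp (p : ℝ) (f : G2 → ℝ) : ℝ≥0∞ := (∫⁻ x, (funMax f x) ^ p ∂muG) ^ (1 / p)

/-- Weak `L^p` quasi-norm. -/
def weakLp (p : ℝ) (f : G2 → ℝ) : ℝ≥0∞ :=
  ⨆ t : NNReal, (t : ℝ≥0∞) * (muG {x | (t : ℝ) < |f x|}) ^ (1 / p)


/-- `f_n = D_{2^{2n+1}} - D_{2^{2n}}`. -/
def fwn (n : ℕ) (x : G2) : ℝ := dirichlet (2 ^ (2 * n + 1)) x - dirichlet (2 ^ (2 * n)) x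

/-!
Since `D_{2^{m+1}} = D_{2^m} (1 + r_m)`, we get `D_{2^m} = 2^m 1_{I_m}` and `f_n = D_{2^{2n}} r_{2n}`,
so `|f_n| = 2^{2n} 1_{I_{2n}}`. The Walsh spectrum of `f_n` is the dyadic block
`[2^{2n}, 2^{2n+1})`, so the dyadic partial sums `S_{2^m} f_n` vanish for `m ≤ 2n` and equal `f_n`
for `m > 2n`. Hence `f_n^* = |f_n|` and `‖f_n‖_{H_p} = (2^{2np} 2^{-2n})^{1/p} = 2^{2n(1-1/p)}`:
the bound holds with `c = 1`, with equality.
-/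

instance : IsProbabilityMeasure muG :=
  ⟨Measure.addHaarMeasure_self⟩

instance : muG.IsAddLeftInvariant := by
  unfold muG; infer_instance

lemma rad_of_eq_zero {j : ℕ} {x : G2} (h : x j = 0) : rad j x = 1 := by
  simp [rad, h]

lemma rad_of_ne_zero {j : ℕ} {x : G2} (h : x j ≠ 0) : rad j x = -1 := by
  have h1 : x j = 1 := (by decide : ∀ a : ZMod 2, a ≠ 0 → a = 1) _ h
  simp [rad, h1, ZMod.val_one]

lemma abs_rad (j : ℕ) (x : G2) : |rad j x| = 1 := by
  by_cases h : x j = 0 <;> simp [rad_of_eq_zero, rad_of_ne_zero, h]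

lemma rad_add (j : ℕ) (x y : G2) : rad j (x + y) = rad j x * rad j y := by
  rw [rad, rad, rad, Pi.add_apply, ZMod.val_add, ← neg_one_pow_eq_pow_mod_two, pow_add]

lemma measurable_walsh (k : ℕ) : Measurable (walsh k) :=
  Finset.measurable_prod _ fun j _ =>
    Measurable.ite (MeasurableSet.const _)
      ((measurable_from_top (f := fun a : ZMod 2 => (-1 : ℝ) ^ a.val)).comp
        (measurable_pi_apply j)) measurable_const

lemma abs_walsh (k : ℕ) (x : G2) : |walsh k x| = 1 := by
  rw [walsh, Finset.abs_prod]
  exact Finset.prod_eq_one fun j _ => by split_ifs <;> simp [abs_rad]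

lemma walsh_add (k : ℕ) (x y : G2) : walsh k (x + y) = walsh k x * walsh k y := by
  rw [walsh, walsh, walsh, ← Finset.prod_mul_distrib]
  exact Finset.prod_congr rfl fun j _ => by split_ifs <;> simp [rad_add]

lemma walsh_eq_prod_range {n N : ℕ} (h : n < 2 ^ N) (x : G2) :
    walsh n x = ∏ j ∈ Finset.range N, if n.testBit j then rad j x else 1 := by
  have extend : ∀ {M M' : ℕ}, M ≤ M' → n < 2 ^ M →
      (∏ j ∈ Finset.range M, if n.testBit j then rad j x else 1) =
        ∏ j ∈ Finset.range M', if n.testBit j then rad j x else 1 := by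
    intro M M' hMM' hM
    refine Finset.prod_subset (Finset.range_subset_range.2 hMM') fun j _ hj => ?_
    have hj : M ≤ j := by simpa using hj
    rw [Nat.testBit_lt_two_pow (hM.trans_le (Nat.pow_le_pow_right two_pos hj)),
      if_neg Bool.false_ne_true]
  rcases le_total n N with hnN | hNn
  · exact extend hnN Nat.lt_two_pow_self
  · exact (extend hNn h).symm

lemma walsh_two_pow_add {m k : ℕ} (hk : k < 2 ^ m) (x : G2) :
    walsh (2 ^ m + k) x = walsh k x * rad m x := by
  rw [walsh_eq_prod_range (N := m + 1) (by rw [pow_succ]; omega), Finset.prod_range_succ,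
    walsh_eq_prod_range hk, Nat.testBit_two_pow_add_eq, Nat.testBit_lt_two_pow hk]
  congr 1
  exact Finset.prod_congr rfl fun j hj => by
    rw [Nat.testBit_two_pow_add_gt (Finset.mem_range.1 hj)]

lemma dirichlet_two_pow_succ (m : ℕ) (x : G2) :
    dirichlet (2 ^ (m + 1)) x = dirichlet (2 ^ m) x * (1 + rad m x) := by
  rw [dirichlet, pow_succ, mul_two, Finset.sum_range_add,
    Finset.sum_congr rfl fun k hk => walsh_two_pow_add (Finset.mem_range.1 hk) x,
    ← Finset.sum_mul, ← dirichlet]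
  ring

lemma cyl_succ (m : ℕ) : cyl (m + 1) = cyl m ∩ {x | x m = 0} := by
  ext x
  simp only [cyl, Set.mem_inter_iff, Nat.forall_lt_succ_right]
  rfl

lemma dirichlet_two_pow (m : ℕ) : dirichlet (2 ^ m) = (cyl m).indicator fun _ => (2 : ℝ) ^ m := by
  induction m with
  | zero => ext x; simp [dirichlet, walsh, cyl]
  | succ m ih =>
    ext x
    rw [dirichlet_two_pow_succ, ih, cyl_succ]
    by_cases hx : x ∈ cyl m <;> by_cases hxm : x m = 0 <;>
      simp [hx, hxm, rad_of_eq_zero, rad_of_ne_zero, pow_succ, one_add_one_eq_two]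

lemma dirichlet_two_pow_nonneg (m : ℕ) (x : G2) : 0 ≤ dirichlet (2 ^ m) x := by
  rw [dirichlet_two_pow]
  exact Set.indicator_nonneg (fun _ _ => by positivity) x

lemma fwn_eq_dirichlet_mul_rad (n : ℕ) (x : G2) :
    fwn n x = dirichlet (2 ^ (2 * n)) x * rad (2 * n) x := by
  rw [fwn, dirichlet_two_pow_succ]
  ring

lemma abs_fwn (n : ℕ) (x : G2) : |fwn n x| = dirichlet (2 ^ (2 * n)) x := by
  rw [fwn_eq_dirichlet_mul_rad, abs_mul, abs_rad, mul_one,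
    abs_of_nonneg (dirichlet_two_pow_nonneg _ x)]

@[simps]
def prefixHom (m : ℕ) : G2 →+ (Fin m → ZMod 2) where
  toFun x i := x i
  map_zero' := rfl
  map_add' _ _ := rfl

lemma coe_ker_prefixHom (m : ℕ) : ((prefixHom m).ker : Set G2) = cyl m := by
  ext x
  simp [prefixHom, cyl, funext_iff, Fin.forall_iff]

lemma prefixHom_surjective (m : ℕ) : Function.Surjective (prefixHom m) := fun v =>
  ⟨fun i => if h : i < m then v ⟨i, h⟩ else 0, funext fun i => by simp [prefixHom]⟩

lemma measurableSet_cyl (m : ℕ) : MeasurableSet (cyl m) := by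
  rw [← coe_ker_prefixHom, AddMonoidHom.coe_ker]
  exact measurable_pi_lambda (prefixHom m) (fun i => measurable_pi_apply (i : ℕ))
    (measurableSet_singleton 0)

lemma index_ker_prefixHom (m : ℕ) : (prefixHom m).ker.index = 2 ^ m := by
  rw [AddSubgroup.index_ker, AddMonoidHom.range_eq_top_of_surjective _ (prefixHom_surjective m),
    AddSubgroup.card_top, Nat.card_eq_fintype_card, Fintype.card_pi]
  simp

lemma muG_cyl (m : ℕ) : muG (cyl m) = ((2 : ℝ≥0∞) ^ m)⁻¹ := by
  have : (prefixHom m).ker.FiniteIndex := ⟨by simp [index_ker_prefixHom]⟩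
  have h := AddSubgroup.index_mul_measure (prefixHom m).ker
    (by rw [coe_ker_prefixHom]; exact measurableSet_cyl m) muG
  rw [index_ker_prefixHom, coe_ker_prefixHom, measure_univ] at h
  exact ENNReal.eq_inv_of_mul_eq_one_left (by rwa [mul_comm] at h) |>.trans (by norm_cast)

lemma walsh_eq_one_of_mem_cyl {k m : ℕ} (hk : k < 2 ^ m) {x : G2} (hx : x ∈ cyl m) :
    walsh k x = 1 :=
  Finset.prod_eq_one fun j _ => by
    split_ifs with hj
    · exact rad_of_eq_zero <| hx j <|
        (Nat.pow_lt_pow_iff_right one_lt_two).1 ((Nat.ge_two_pow_of_testBit hj).trans_lt hk)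
    · rfl

lemma walsh_single {k t : ℕ} (ht : k.testBit t) : walsh k (Pi.single t 1) = -1 := by
  have htk : t < k := Nat.lt_two_pow_self.trans_le (Nat.ge_two_pow_of_testBit ht)
  rw [walsh, Finset.prod_eq_single_of_mem t (Finset.mem_range.2 htk)]
  · rw [if_pos ht, rad_of_ne_zero (by simp)]
  · intro j _ hj
    rw [rad_of_eq_zero (by simp [hj]), ite_self]

lemma single_add_mem_cyl_iff {m t : ℕ} (hmt : m ≤ t) (x : G2) :
    Pi.single t 1 + x ∈ cyl m ↔ x ∈ cyl m :=
  forall₂_congr fun i hi => by simp [(hi.trans_le hmt).ne]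

/-- Translation by `Pi.single t 1` preserves `cyl m` and flips the sign of `walsh k`. -/
lemma setIntegral_cyl_walsh_of_testBit {m k t : ℕ} (hmt : m ≤ t) (ht : k.testBit t) :
    ∫ x in cyl m, walsh k x ∂muG = 0 := by
  set g := (cyl m).indicator (walsh k)
  have hg : ∀ x, g (Pi.single t 1 + x) = -g x := fun x => by
    simp only [g, Set.indicator, single_add_mem_cyl_iff hmt, walsh_add, walsh_single ht]
    split_ifs <;> ring
  have h := integral_add_left_eq_self (μ := muG) g (Pi.single t 1)
  simp only [hg, integral_neg] at h
  rw [← integral_indicator (measurableSet_cyl m)]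
  linarith

lemma setIntegral_cyl_walsh (m k : ℕ) :
    ∫ x in cyl m, walsh k x ∂muG = if k < 2 ^ m then ((2 : ℝ) ^ m)⁻¹ else 0 := by
  split_ifs with hk
  · rw [setIntegral_congr_fun (measurableSet_cyl m) fun x hx => walsh_eq_one_of_mem_cyl hk hx,
      setIntegral_const, measureReal_def, muG_cyl]
    simp
  · obtain ⟨t, hmt, ht⟩ := Nat.exists_ge_and_testBit_of_ge_two_pow (not_lt.1 hk)
    exact setIntegral_cyl_walsh_of_testBit hmt ht

lemma integrable_dirichlet_two_pow (m : ℕ) : Integrable (dirichlet (2 ^ m)) muG := by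
  rw [dirichlet_two_pow]
  exact (integrable_const _).indicator (measurableSet_cyl m)

lemma fhat_dirichlet_two_pow (m k : ℕ) :
    fhat (dirichlet (2 ^ m)) k = if k < 2 ^ m then 1 else 0 := by
  simp_rw [fhat, dirichlet_two_pow, ← Set.indicator_mul_left,
    integral_indicator (measurableSet_cyl m), integral_const_mul, setIntegral_cyl_walsh]
  split_ifs <;> simp

lemma fhat_sub {f g : G2 → ℝ} (hf : Integrable f muG) (hg : Integrable g muG) (k : ℕ) :
    fhat (f - g) k = fhat f k - fhat g k := by
  have hw : ∀ᵐ x ∂muG, ‖walsh k x‖ ≤ 1 := ae_of_all _ fun x => (abs_walsh k x).le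
  have hm := (measurable_walsh k).aestronglyMeasurable (μ := muG)
  simp only [fhat, Pi.sub_apply, sub_mul]
  exact integral_sub (hf.mul_bdd hm hw) (hg.mul_bdd hm hw)

lemma funS_sub {f g : G2 → ℝ} (hf : Integrable f muG) (hg : Integrable g muG) (N : ℕ) (x : G2) :
    funS (f - g) N x = funS f N x - funS g N x := by
  simp only [funS, fhat_sub hf hg, sub_mul, Finset.sum_sub_distrib]

lemma funS_dirichlet_two_pow (a m : ℕ) (x : G2) :
    funS (dirichlet (2 ^ a)) (2 ^ m) x = dirichlet (2 ^ min a m) x := by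
  have hmin : 2 ^ min a m = min (2 ^ m) (2 ^ a) :=
    ((pow_right_mono₀ one_le_two).map_min).trans (min_comm _ _)
  simp only [funS, fhat_dirichlet_two_pow, ite_mul, one_mul, zero_mul, Finset.sum_ite,
    Finset.sum_const_zero, add_zero, dirichlet, hmin]
  congr 1
  ext k
  simp

lemma funS_fwn (n m : ℕ) (x : G2) :
    funS (fwn n) (2 ^ m) x =
      dirichlet (2 ^ min (2 * n + 1) m) x - dirichlet (2 ^ min (2 * n) m) x := by
  rw [show fwn n = dirichlet (2 ^ (2 * n + 1)) - dirichlet (2 ^ (2 * n)) from rfl,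
    funS_sub (integrable_dirichlet_two_pow _) (integrable_dirichlet_two_pow _),
    funS_dirichlet_two_pow, funS_dirichlet_two_pow]

lemma funMax_fwn (n : ℕ) (x : G2) : funMax (fwn n) x = ‖fwn n x‖₊ := by
  refine le_antisymm (iSup_le fun m => ?_) (le_iSup_of_le (2 * n + 1) ?_)
  · rw [funS_fwn]
    rcases le_or_gt m (2 * n) with hm | hm
    · simp [min_eq_right hm, min_eq_right (hm.trans (Nat.le_succ _))]
    · rw [min_eq_left hm, min_eq_left hm.le]
      rfl
  · rw [funS_fwn, min_self, min_eq_left (Nat.le_succ _)]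
    rfl

lemma nnnorm_fwn (n : ℕ) (x : G2) :
    (‖fwn n x‖₊ : ℝ≥0∞) = (cyl (2 * n)).indicator (fun _ => (2 : ℝ≥0∞) ^ (2 * n)) x := by
  rw [← enorm_eq_nnnorm, ← ofReal_norm, Real.norm_eq_abs, abs_fwn, dirichlet_two_pow]
  by_cases hx : x ∈ cyl (2 * n) <;> simp [hx]

lemma funHp_fwn {p : ℝ} (hp : 0 < p) (n : ℕ) :
    funHp p (fwn n) = ENNReal.ofReal (2 ^ ((2 * n : ℝ) * (1 - 1 / p))) := by
  have hpow : ∀ x, funMax (fwn n) x ^ p =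
      (cyl (2 * n)).indicator (fun _ => (2 : ℝ≥0∞) ^ ((2 * n : ℝ) * p)) x := fun x => by
    rw [funMax_fwn, nnnorm_fwn]
    by_cases hx : x ∈ cyl (2 * n)
    · simp [hx, ← ENNReal.rpow_natCast, ← ENNReal.rpow_mul]
    · simp [hx, hp]
  rw [funHp, funext hpow, lintegral_indicator_const (measurableSet_cyl _), muG_cyl,
    ← ENNReal.rpow_natCast, ← ENNReal.rpow_neg, ← ENNReal.rpow_add _ _ two_ne_zero ofNat_ne_top,
    ← ENNReal.rpow_mul, ← ENNReal.ofReal_rpow_of_pos two_pos, ofReal_ofNat]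
  congr 1
  field_simp
  push_cast
  ring

theorem stmt7_general (p : ℝ) (hp : 0 < p) :
    ∃ c : ℝ, 0 < c ∧ ∀ n : ℕ,
      funHp p (fwn n) ≤ ENNReal.ofReal (c * (2 : ℝ) ^ ((2 * n : ℝ) * (1 - 1 / p))) :=
  ⟨1, one_pos, fun n => by rw [one_mul, funHp_fwn hp]⟩

theorem stmt7 (p : ℝ) (hp : 0 < p) (hp1 : p ≤ 1) :
    ∃ c : ℝ, 0 < c ∧ ∀ n : ℕ,
      funHp p (fwn n) ≤ ENNReal.ofReal (c * (2 : ℝ) ^ ((2 * n : ℝ) * (1 - 1 / p))) :=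
  stmt7_general p hp

end
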